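/- Let λ ∈ (0,2), C₋, C₊ ∈ ℝ, S₀ ∈ ℝ and M > 0, and let f₋, f₊ : ℝ → ℝ be bounded continuous functions with |f₋(s) − C₋| ≤ M e^{−λs} and |f₊(s) − C₊| ≤ M e^{−λs} for all s ≥ S₀. Then the Poisson extension f of (f₋, f₊) is differentiable in t along the midline t = 1/2, and there is M′ > 0 such that |∂f/∂t (s, 1/2) − (C₊ − C₋)| ≤ M′ e^{−λs} for all s ≥ S₀ + 1. -/

import Mathlib

open Real MeasureTheory

/-- The Poisson kernel of the unit strip `{s + it : 0 < t < 1}`. -/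
noncomputable def stripPoissonKernel (s t : ℝ) : ℝ :=
  Real.sin (π * t) / (Real.cosh s - Real.cos (π * t))

/-- The Poisson extension to the strip of a pair of boundary functions `f₋, f₊ : ℝ → ℝ`. -/
noncomputable def poissonExt (fm fp : ℝ → ℝ) (s t : ℝ) : ℝ :=
  (1 / (2 * π)) *
    ∫ σ : ℝ, (stripPoissonKernel (σ - s) t * fm σ + stripPoissonKernel (σ - s) (1 - t) * fp σ)

open Set Filter Topology

/-!
At `t = 1/2` the `t`-derivatives of the two kernels `P(σ - s, t)` and `P(σ - s, 1 - t)` are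
`∓π sech²(σ - s)`, so differentiating under the integral (dominated by a multiple of `sech`) gives
`∂ₜf(s, 1/2) = ½ ∫ sech²(σ - s) g(σ) dσ` with `g = f₊ - f₋`. Since `∫ sech² = 2`, the deviation
from `C = C₊ - C₋` is `½ ∫ sech²(σ - s) (g(σ) - C) dσ`. Boundedness of `g` together with the tail
bound gives `|g(σ) - C| ≤ A e^{-λσ}` for all `σ`, and because `sech² u ≤ 4 e^{-2|u|}` with `λ < 2`,
the convolution of `e^{-λσ}` with `sech²` is a multiple of `e^{-λs}`.
-/
lemma inv_cosh_le_two_mul_exp_neg_abs (x : ℝ) : (cosh x)⁻¹ ≤ 2 * exp (-|x|) := by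
  have h : exp |x| ≤ 2 * cosh x := by
    rw [cosh_eq]
    rcases abs_cases x with ⟨h, _⟩ | ⟨h, _⟩ <;> rw [h] <;> linarith [exp_pos x, exp_pos (-x)]
  rw [exp_neg, ← div_eq_mul_inv, le_div_iff₀ (exp_pos _), inv_mul_eq_div,
    div_le_iff₀ (cosh_pos x)]
  linarith

lemma integrable_exp_neg_mul_abs {a : ℝ} (ha : 0 < a) :
    Integrable fun x : ℝ => exp (-(a * |x|)) := by
  have hIoi : IntegrableOn (fun x : ℝ => exp (-(a * |x|))) (Ioi 0) :=
    (exp_neg_integrableOn_Ioi 0 ha).congr_fun (fun x hx => by simp [abs_of_pos (mem_Ioi.1 hx)])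
      measurableSet_Ioi
  have hIic : IntegrableOn (fun x : ℝ => exp (-(a * |x|))) (Iic 0) := by
    rw [integrableOn_Iic_iff_integrableOn_Iio,
      ← (Measure.measurePreserving_neg volume).integrableOn_comp_preimage
        (Homeomorph.neg ℝ).measurableEmbedding]
    simpa [Function.comp_def] using hIoi
  rw [← integrableOn_univ, ← Iic_union_Ioi (a := 0)]
  exact hIic.union hIoi

lemma integrable_inv_cosh : Integrable fun x : ℝ => (cosh x)⁻¹ := by
  refine ((integrable_exp_neg_mul_abs one_pos).const_mul 2).mono'
    (continuous_cosh.inv₀ fun x => (cosh_pos x).ne').aestronglyMeasurable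
    (Eventually.of_forall fun x => ?_)
  rw [norm_inv, Real.norm_of_nonneg (cosh_pos x).le, one_mul]
  exact inv_cosh_le_two_mul_exp_neg_abs x

lemma inv_cosh_sq_le_inv_cosh (x : ℝ) : (cosh x ^ 2)⁻¹ ≤ (cosh x)⁻¹ :=
  inv_anti₀ (cosh_pos x) (le_self_pow₀ (one_le_cosh x) two_ne_zero)

lemma integrable_inv_cosh_sq : Integrable fun x : ℝ => (cosh x ^ 2)⁻¹ :=
  integrable_inv_cosh.mono'
    ((continuous_cosh.pow 2).inv₀ fun x => (pow_pos (cosh_pos x) 2).ne').aestronglyMeasurable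
    (Eventually.of_forall fun x => by
      rw [Real.norm_of_nonneg (by positivity)]; exact inv_cosh_sq_le_inv_cosh x)

lemma hasDerivAt_tanh (x : ℝ) : HasDerivAt tanh (cosh x ^ 2)⁻¹ x := by
  have h := (hasDerivAt_sinh x).div (hasDerivAt_cosh x) (cosh_pos x).ne'
  rw [← sq, ← sq, cosh_sq_sub_sinh_sq, one_div] at h
  exact h.congr_of_eventuallyEq (Eventually.of_forall fun y => tanh_eq_sinh_div_cosh y)

lemma tendsto_tanh_atTop : Tendsto tanh atTop (𝓝 1) := by
  have hlow : ∀ x, 1 - exp (-x) ≤ tanh x := fun x => by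
    rw [← cosh_sub_sinh, tanh_eq_sinh_div_cosh, sub_le_comm, one_sub_div (cosh_pos x).ne']
    exact div_le_self (by rw [cosh_sub_sinh]; positivity) (one_le_cosh x)
  refine tendsto_of_tendsto_of_tendsto_of_le_of_le ?_ tendsto_const_nhds hlow
    fun x => (tanh_lt_one x).le
  simpa using tendsto_exp_neg_atTop_nhds_zero.const_sub 1

lemma tendsto_tanh_atBot : Tendsto tanh atBot (𝓝 (-1)) := by
  simpa [Function.comp_def] using (tendsto_tanh_atTop.comp tendsto_neg_atBot_atTop).neg

lemma integral_inv_cosh_sq : ∫ x : ℝ, (cosh x ^ 2)⁻¹ = 2 := by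
  rw [integral_of_hasDerivAt_of_tendsto hasDerivAt_tanh integrable_inv_cosh_sq
    tendsto_tanh_atBot tendsto_tanh_atTop]
  norm_num

noncomputable def stripPoissonKernelDeriv (x t : ℝ) : ℝ :=
  π * (cos (π * t) * cosh x - 1) / (cosh x - cos (π * t)) ^ 2

lemma hasDerivAt_stripPoissonKernel {x t : ℝ} (h : cos (π * t) < cosh x) :
    HasDerivAt (stripPoissonKernel x) (stripPoissonKernelDeriv x t) t := by
  have hsin : HasDerivAt (fun t => sin (π * t)) (cos (π * t) * π) t := by
    simpa using ((hasDerivAt_id t).const_mul π).sin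
  have hden : HasDerivAt (fun t => cosh x - cos (π * t)) (sin (π * t) * π) t := by
    simpa using (((hasDerivAt_id t).const_mul π).cos).const_sub (cosh x)
  refine (hsin.div hden (sub_pos.2 h).ne').congr_deriv ?_
  rw [stripPoissonKernelDeriv]
  congr 1
  linear_combination -π * sin_sq_add_cos_sq (π * t)

lemma stripPoissonKernel_half (x : ℝ) : stripPoissonKernel x (1 / 2) = (cosh x)⁻¹ := by
  rw [stripPoissonKernel, mul_one_div, cos_pi_div_two, sin_pi_div_two, sub_zero, one_div]

lemma stripPoissonKernelDeriv_half (x : ℝ) :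
    stripPoissonKernelDeriv x (1 / 2) = -π * (cosh x ^ 2)⁻¹ := by
  rw [stripPoissonKernelDeriv, mul_one_div, cos_pi_div_two]
  ring

lemma abs_stripPoissonKernelDeriv_le {x t : ℝ} (h : |cos (π * t)| ≤ 1 / 2) :
    |stripPoissonKernelDeriv x t| ≤ 8 * π * (cosh x)⁻¹ := by
  obtain ⟨hc₁, hc₂⟩ := abs_le.1 h
  have hcosh := one_le_cosh x
  have hden : cosh x / 2 ≤ cosh x - cos (π * t) := by linarith
  have hnum : |cos (π * t) * cosh x - 1| ≤ 2 * cosh x :=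
    abs_le.2 ⟨by nlinarith, by nlinarith⟩
  rw [stripPoissonKernelDeriv, abs_div, abs_mul, abs_of_pos pi_pos,
    abs_of_nonneg (sq_nonneg (cosh x - cos (π * t)))]
  calc π * |cos (π * t) * cosh x - 1| / (cosh x - cos (π * t)) ^ 2
      ≤ π * (2 * cosh x) / (cosh x / 2) ^ 2 := by gcongr
    _ = 8 * π * (cosh x)⁻¹ := by field_simp; norm_num

lemma measurable_stripPoissonKernel (t : ℝ) : Measurable fun x => stripPoissonKernel x t := by
  unfold stripPoissonKernel; fun_prop

lemma measurable_stripPoissonKernelDeriv (t : ℝ) :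
    Measurable fun x => stripPoissonKernelDeriv x t := by
  unfold stripPoissonKernelDeriv; fun_prop

lemma abs_cos_pi_mul_one_sub (t : ℝ) : |cos (π * (1 - t))| = |cos (π * t)| := by
  rw [mul_one_sub, cos_pi_sub, abs_neg]

lemma setOf_abs_cos_pi_mul_lt_half_mem_nhds : {t : ℝ | |cos (π * t)| < 1 / 2} ∈ 𝓝 (1 / 2) :=
  IsOpen.mem_nhds (isOpen_lt (by fun_prop) continuous_const)
    (by norm_num [mul_one_div, cos_pi_div_two])

lemma hasDerivAt_stripPoissonKernel_add {x t : ℝ} (a b : ℝ) (h : |cos (π * t)| ≤ 1 / 2) :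
    HasDerivAt (fun t => stripPoissonKernel x t * a + stripPoissonKernel x (1 - t) * b)
      (stripPoissonKernelDeriv x t * a - stripPoissonKernelDeriv x (1 - t) * b) t := by
  have hlt (t : ℝ) (ht : |cos (π * t)| ≤ 1 / 2) : cos (π * t) < cosh x := by
    linarith [le_abs_self (cos (π * t)), one_le_cosh x]
  have d₁ := hasDerivAt_stripPoissonKernel (hlt t h)
  have d₂ := (hasDerivAt_stripPoissonKernel (hlt (1 - t) (by rwa [abs_cos_pi_mul_one_sub]))).comp
    t ((hasDerivAt_id t).const_sub 1)
  exact ((d₁.mul_const a).add (d₂.mul_const b)).congr_deriv (by ring)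

lemma abs_stripPoissonKernelDeriv_sub_le {x t : ℝ} (a b : ℝ) (h : |cos (π * t)| ≤ 1 / 2) :
    |stripPoissonKernelDeriv x t * a - stripPoissonKernelDeriv x (1 - t) * b| ≤
      8 * π * (cosh x)⁻¹ * (|a| + |b|) := by
  rw [mul_add]
  refine (abs_sub _ _).trans (add_le_add ?_ ?_) <;> rw [abs_mul] <;> gcongr
  · exact abs_stripPoissonKernelDeriv_le h
  · exact abs_stripPoissonKernelDeriv_le (by rwa [abs_cos_pi_mul_one_sub])

theorem hasDerivAt_poissonExt_half {fm fp : ℝ → ℝ} (hfm : AEStronglyMeasurable fm)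
    (hfp : AEStronglyMeasurable fp) (hfmb : ∃ K, ∀ x, |fm x| ≤ K) (hfpb : ∃ K, ∀ x, |fp x| ≤ K)
    (s : ℝ) :
    HasDerivAt (poissonExt fm fp s)
      ((1 / 2) * ∫ σ, (cosh (σ - s) ^ 2)⁻¹ * (fp σ - fm σ)) (1 / 2) := by
  obtain ⟨Km, hKm⟩ := hfmb
  obtain ⟨Kp, hKp⟩ := hfpb
  have hsech := integrable_inv_cosh.comp_sub_right s
  have hF_meas (t : ℝ) : AEStronglyMeasurable fun σ =>
      stripPoissonKernel (σ - s) t * fm σ + stripPoissonKernel (σ - s) (1 - t) * fp σ := by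
    have hP (t : ℝ) := ((measurable_stripPoissonKernel t).comp (measurable_sub_const s))
    exact ((hP t).aestronglyMeasurable.mul hfm).add ((hP (1 - t)).aestronglyMeasurable.mul hfp)
  have hF_int : Integrable fun σ =>
      stripPoissonKernel (σ - s) (1 / 2) * fm σ
        + stripPoissonKernel (σ - s) (1 - 1 / 2) * fp σ := by
    have hbdd : ∀ σ, ‖fm σ + fp σ‖ ≤ Km + Kp := fun σ =>
      (norm_add_le _ _).trans (add_le_add (hKm σ) (hKp σ))
    refine (hsech.mul_bdd (hfm.add hfp) (Eventually.of_forall hbdd)).congr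
      (Eventually.of_forall fun σ => ?_)
    simp only [Pi.add_apply]
    rw [show (1 : ℝ) - 1 / 2 = 1 / 2 by norm_num, stripPoissonKernel_half]
    ring
  have hF'_meas : AEStronglyMeasurable fun σ =>
      stripPoissonKernelDeriv (σ - s) (1 / 2) * fm σ
        - stripPoissonKernelDeriv (σ - s) (1 - 1 / 2) * fp σ := by
    have hD (t : ℝ) := ((measurable_stripPoissonKernelDeriv t).comp (measurable_sub_const s))
    exact ((hD _).aestronglyMeasurable.mul hfm).sub ((hD _).aestronglyMeasurable.mul hfp)
  have h_bound : ∀ σ, ∀ t ∈ {t : ℝ | |cos (π * t)| < 1 / 2},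
      ‖stripPoissonKernelDeriv (σ - s) t * fm σ - stripPoissonKernelDeriv (σ - s) (1 - t) * fp σ‖
        ≤ 8 * π * (cosh (σ - s))⁻¹ * (Km + Kp) := fun σ t ht =>
    (abs_stripPoissonKernelDeriv_sub_le _ _ (le_of_lt ht)).trans (by gcongr <;> simp [hKm, hKp])
  obtain ⟨-, hD⟩ := hasDerivAt_integral_of_dominated_loc_of_deriv_le
    setOf_abs_cos_pi_mul_lt_half_mem_nhds (Eventually.of_forall hF_meas) hF_int hF'_meas
    (Eventually.of_forall h_bound) ((hsech.const_mul _).mul_const _)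
    (Eventually.of_forall fun σ t ht => hasDerivAt_stripPoissonKernel_add _ _ (le_of_lt ht))
  refine (hD.const_mul (1 / (2 * π))).congr_deriv ?_
  have hF' : ∀ σ, stripPoissonKernelDeriv (σ - s) (1 / 2) * fm σ
      - stripPoissonKernelDeriv (σ - s) (1 - 1 / 2) * fp σ
      = π * ((cosh (σ - s) ^ 2)⁻¹ * (fp σ - fm σ)) := fun σ => by
    rw [show (1 : ℝ) - 1 / 2 = 1 / 2 by norm_num, stripPoissonKernelDeriv_half]
    ring
  simp_rw [hF', integral_const_mul]
  field_simp

lemma exp_neg_mul_le_mul_exp_abs_sub {lam : ℝ} (hlam : 0 ≤ lam) (σ s : ℝ) :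
    exp (-lam * σ) ≤ exp (-lam * s) * exp (lam * |σ - s|) := by
  rw [← exp_add, exp_le_exp]
  nlinarith [neg_abs_le (σ - s)]

lemma inv_cosh_sq_mul_exp_le {lam : ℝ} (hlam : 0 ≤ lam) (σ s : ℝ) :
    (cosh (σ - s) ^ 2)⁻¹ * exp (-lam * σ) ≤
      4 * exp (-lam * s) * exp (-((2 - lam) * |σ - s|)) := by
  have hexp : exp (-|σ - s|) ^ 2 * exp (lam * |σ - s|) = exp (-((2 - lam) * |σ - s|)) := by
    rw [← exp_nat_mul, ← exp_add]
    ring_nf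
  calc (cosh (σ - s) ^ 2)⁻¹ * exp (-lam * σ)
      ≤ (2 * exp (-|σ - s|)) ^ 2 * (exp (-lam * s) * exp (lam * |σ - s|)) := by
        rw [← inv_pow]
        gcongr
        · exact inv_cosh_le_two_mul_exp_neg_abs _
        · exact exp_neg_mul_le_mul_exp_abs_sub hlam σ s
    _ = 4 * exp (-lam * s) * exp (-((2 - lam) * |σ - s|)) := by
        rw [← hexp]
        ring

theorem abs_half_integral_inv_cosh_sq_mul_sub_le {g : ℝ → ℝ} {C A lam : ℝ}
    (hg : AEStronglyMeasurable g) (hlam0 : 0 ≤ lam) (hlam2 : lam < 2)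
    (hdecay : ∀ σ, |g σ - C| ≤ A * exp (-lam * σ)) (s : ℝ) :
    |(1 / 2) * (∫ σ, (cosh (σ - s) ^ 2)⁻¹ * g σ) - C| ≤
      2 * A * (∫ u, exp (-((2 - lam) * |u|))) * exp (-lam * s) := by
  have hA : 0 ≤ A := by simpa using (abs_nonneg _).trans (hdecay 0)
  have hw := integrable_inv_cosh_sq.comp_sub_right s
  have hmaj : Integrable fun σ => 4 * A * exp (-lam * s) * exp (-((2 - lam) * |σ - s|)) :=
    ((integrable_exp_neg_mul_abs (by linarith)).comp_sub_right s).const_mul _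
  have hpt : ∀ σ, ‖(cosh (σ - s) ^ 2)⁻¹ * (g σ - C)‖ ≤
      4 * A * exp (-lam * s) * exp (-((2 - lam) * |σ - s|)) := fun σ => by
    rw [norm_mul, Real.norm_of_nonneg (by positivity), Real.norm_eq_abs]
    calc (cosh (σ - s) ^ 2)⁻¹ * |g σ - C| ≤ (cosh (σ - s) ^ 2)⁻¹ * (A * exp (-lam * σ)) := by
          gcongr; exact hdecay σ
      _ = A * ((cosh (σ - s) ^ 2)⁻¹ * exp (-lam * σ)) := by ring
      _ ≤ A * (4 * exp (-lam * s) * exp (-((2 - lam) * |σ - s|))) :=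
          mul_le_mul_of_nonneg_left (inv_cosh_sq_mul_exp_le hlam0 σ s) hA
      _ = _ := by ring
  have hdev : Integrable fun σ => (cosh (σ - s) ^ 2)⁻¹ * (g σ - C) :=
    hmaj.mono' (hw.aestronglyMeasurable.mul (hg.sub aestronglyMeasurable_const))
      (Eventually.of_forall hpt)
  have hmass : ∫ σ, (cosh (σ - s) ^ 2)⁻¹ * C = 2 * C := by
    rw [integral_mul_const, integral_sub_right_eq_self (fun x => (cosh x ^ 2)⁻¹) s,
      integral_inv_cosh_sq]
  have hsplit : (1 / 2) * (∫ σ, (cosh (σ - s) ^ 2)⁻¹ * g σ) - C =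
      (1 / 2) * ∫ σ, (cosh (σ - s) ^ 2)⁻¹ * (g σ - C) := by
    have h : ∫ σ, (cosh (σ - s) ^ 2)⁻¹ * g σ =
        (∫ σ, (cosh (σ - s) ^ 2)⁻¹ * (g σ - C)) + ∫ σ, (cosh (σ - s) ^ 2)⁻¹ * C := by
      rw [← integral_add hdev (hw.mul_const C)]
      simp only [← mul_add, sub_add_cancel]
    rw [h, hmass]
    ring
  rw [hsplit, abs_mul, abs_of_pos one_half_pos]
  calc 1 / 2 * |∫ σ, (cosh (σ - s) ^ 2)⁻¹ * (g σ - C)|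
      ≤ 1 / 2 * ∫ σ, 4 * A * exp (-lam * s) * exp (-((2 - lam) * |σ - s|)) := by
        gcongr
        exact norm_integral_le_of_norm_le hmaj (Eventually.of_forall hpt)
    _ = _ := by
        rw [integral_const_mul,
          integral_sub_right_eq_self (fun u => exp (-((2 - lam) * |u|))) s]
        ring

lemma abs_le_max_mul_exp_of_forall_ge {h : ℝ → ℝ} {B M lam S₀ : ℝ} (hlam : 0 ≤ lam)
    (hB : ∀ σ, |h σ| ≤ B) (hM : ∀ σ, S₀ ≤ σ → |h σ| ≤ M * exp (-lam * σ)) (σ : ℝ) :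
    |h σ| ≤ max M (B * exp (lam * S₀)) * exp (-lam * σ) := by
  rcases le_or_gt S₀ σ with hσ | hσ
  · exact (hM σ hσ).trans (by gcongr; exact le_max_left _ _)
  · calc |h σ| ≤ B := hB σ
      _ ≤ B * exp (lam * S₀) * exp (-lam * σ) := by
          rw [mul_assoc, ← exp_add]
          exact le_mul_of_one_le_right ((abs_nonneg _).trans (hB σ))
            (one_le_exp (by nlinarith))
      _ ≤ max M (B * exp (lam * S₀)) * exp (-lam * σ) := by gcongr; exact le_max_right _ _

theorem poissonExt_deriv_t_midline_general
    (lam Cm Cp S₀ M : ℝ) (hlam0 : 0 < lam) (hlam2 : lam < 2)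
    (fm fp : ℝ → ℝ) (hfmc : Continuous fm) (hfpc : Continuous fp)
    (hfmb : ∃ K : ℝ, ∀ s : ℝ, |fm s| ≤ K) (hfpb : ∃ K : ℝ, ∀ s : ℝ, |fp s| ≤ K)
    (hdm : ∀ s : ℝ, S₀ ≤ s → |fm s - Cm| ≤ M * Real.exp (-lam * s))
    (hdp : ∀ s : ℝ, S₀ ≤ s → |fp s - Cp| ≤ M * Real.exp (-lam * s)) :
    (∀ s : ℝ, DifferentiableAt ℝ (fun t : ℝ => poissonExt fm fp s t) (1 / 2)) ∧
    ∃ M' : ℝ, 0 < M' ∧ ∀ s : ℝ, S₀ + 1 ≤ s →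
      |deriv (fun t : ℝ => poissonExt fm fp s t) (1 / 2) - (Cp - Cm)|
        ≤ M' * Real.exp (-lam * s) := by
  have hderiv := hasDerivAt_poissonExt_half hfmc.aestronglyMeasurable hfpc.aestronglyMeasurable
    hfmb hfpb
  obtain ⟨Km, hKm⟩ := hfmb
  obtain ⟨Kp, hKp⟩ := hfpb
  have hbdd : ∀ σ, |(fp σ - fm σ) - (Cp - Cm)| ≤ Kp + Km + |Cp - Cm| := fun σ =>
    (abs_sub _ _).trans (add_le_add_left ((abs_sub _ _).trans (add_le_add (hKp σ) (hKm σ))) _)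
  have htail : ∀ σ, S₀ ≤ σ → |(fp σ - fm σ) - (Cp - Cm)| ≤ 2 * M * exp (-lam * σ) := by
    intro σ hσ
    rw [show fp σ - fm σ - (Cp - Cm) = (fp σ - Cp) - (fm σ - Cm) by ring]
    linarith [abs_sub (fp σ - Cp) (fm σ - Cm), hdp σ hσ, hdm σ hσ]
  obtain ⟨A, hdecay⟩ : ∃ A, ∀ σ, |(fp σ - fm σ) - (Cp - Cm)| ≤ A * exp (-lam * σ) :=
    ⟨_, abs_le_max_mul_exp_of_forall_ge hlam0.le hbdd htail⟩
  refine ⟨fun s => (hderiv s).differentiableAt,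
    max (2 * A * ∫ u, exp (-((2 - lam) * |u|))) 1, lt_max_of_lt_right one_pos, fun s _ => ?_⟩
  rw [(hderiv s).deriv]
  refine (abs_half_integral_inv_cosh_sq_mul_sub_le (hfpc.sub hfmc).aestronglyMeasurable hlam0.le
    hlam2 hdecay s).trans ?_
  gcongr
  exact le_max_left _ _

/-- If bounded continuous boundary data `f₋, f₊` converge exponentially (with rate `0 < λ < 2`)
to constants `C₋, C₊`, then the Poisson extension is differentiable in `t` along the midline
`t = 1/2`, and `∂f/∂t(s,1/2)` converges exponentially to `C₊ − C₋` as `s → +∞`. -/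
theorem poissonExt_deriv_t_midline
    (lam Cm Cp S₀ M : ℝ) (hlam0 : 0 < lam) (hlam2 : lam < 2) (hM : 0 < M)
    (fm fp : ℝ → ℝ) (hfmc : Continuous fm) (hfpc : Continuous fp)
    (hfmb : ∃ K : ℝ, ∀ s : ℝ, |fm s| ≤ K) (hfpb : ∃ K : ℝ, ∀ s : ℝ, |fp s| ≤ K)
    (hdm : ∀ s : ℝ, S₀ ≤ s → |fm s - Cm| ≤ M * Real.exp (-lam * s))
    (hdp : ∀ s : ℝ, S₀ ≤ s → |fp s - Cp| ≤ M * Real.exp (-lam * s)) :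
    (∀ s : ℝ, DifferentiableAt ℝ (fun t : ℝ => poissonExt fm fp s t) (1 / 2)) ∧
    ∃ M' : ℝ, 0 < M' ∧ ∀ s : ℝ, S₀ + 1 ≤ s →
      |deriv (fun t : ℝ => poissonExt fm fp s t) (1 / 2) - (Cp - Cm)|
        ≤ M' * Real.exp (-lam * s) :=
  poissonExt_deriv_t_midline_general lam Cm Cp S₀ M hlam0 hlam2 fm fp hfmc hfpc hfmb hfpb hdm hdp
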